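/- Fix n ≥ 1, d ≥ 1, a configuration y : Fin n → ℝ^d, and a sequence of configurations x^{(k)} : Fin n → ℝ^d, k ∈ ℕ. Then min-SWGG(x^{(k)}, y) → 0 as k → ∞ if and only if W²(x^{(k)}, y) → 0 as k → ∞. (Since the 2-Wasserstein distance metrizes weak convergence together with convergence of second moments, this expresses that min-SWGG metrizes weak convergence on uniform n-atom empirical measures.) -/
import Mathlib


open scoped RealInnerProductSpace

/-- The SWGG value associated to configurations `x, y` and permutations `σ, τ`:
`(1/n) Σ_i ‖x_{σ(i)} − y_{τ(i)}‖²`. -/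
noncomputable def SWGG {n d : ℕ} (x y : Fin n → EuclideanSpace ℝ (Fin d))
    (σ τ : Equiv.Perm (Fin n)) : ℝ :=
  (n : ℝ)⁻¹ * ∑ i, ‖x (σ i) - y (τ i)‖ ^ 2

/-- A permutation `σ` is θ-sorting for `x` if `i ↦ ⟨x_{σ(i)}, θ⟩` is nondecreasing. -/
def IsSorting {n d : ℕ} (θ : EuclideanSpace ℝ (Fin d))
    (x : Fin n → EuclideanSpace ℝ (Fin d)) (σ : Equiv.Perm (Fin n)) : Prop :=
  Monotone fun i => ⟪x (σ i), θ⟫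

/-- Squared 2-Wasserstein distance between the uniform empirical measures of `x` and `y`:
`(1/n) · min_ρ Σ_i ‖x_i − y_{ρ(i)}‖²`. -/
noncomputable def Wsq {n d : ℕ} (x y : Fin n → EuclideanSpace ℝ (Fin d)) : ℝ :=
  (n : ℝ)⁻¹ * ⨅ ρ : Equiv.Perm (Fin n), ∑ i, ‖x i - y (ρ i)‖ ^ 2

/-- `min-SWGG`: the infimum of `SWGG x y θ σ τ` over unit vectors `θ` and
θ-sorting permutations `σ` for `x`, `τ` for `y`. -/
noncomputable def minSWGG {n d : ℕ} (x y : Fin n → EuclideanSpace ℝ (Fin d)) : ℝ :=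
  sInf { r : ℝ | ∃ θ : EuclideanSpace ℝ (Fin d), ∃ σ τ : Equiv.Perm (Fin n),
    ‖θ‖ = 1 ∧ IsSorting θ x σ ∧ IsSorting θ y τ ∧ r = SWGG x y σ τ }

section lemmas
variable {n d : ℕ}

lemma wsq_nonneg (x y : Fin n → EuclideanSpace ℝ (Fin d)) : 0 ≤ Wsq x y := by
  refine mul_nonneg (by positivity) (le_ciInf fun ρ => Finset.sum_nonneg fun i _ => by positivity)

lemma swgg_nonneg (x y : Fin n → EuclideanSpace ℝ (Fin d)) (σ τ : Equiv.Perm (Fin n)) :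
    0 ≤ SWGG x y σ τ :=
  mul_nonneg (by positivity) (Finset.sum_nonneg fun i _ => by positivity)

lemma wsq_le_swgg (x y : Fin n → EuclideanSpace ℝ (Fin d)) (σ τ : Equiv.Perm (Fin n)) :
    Wsq x y ≤ SWGG x y σ τ := by
  unfold Wsq SWGG
  refine mul_le_mul_of_nonneg_left ?_ (by positivity)
  have h := ciInf_le (Set.Finite.bddBelow (Set.finite_range
    (fun ρ : Equiv.Perm (Fin n) => ∑ i, ‖x i - y (ρ i)‖ ^ 2))) (σ.symm.trans τ)
  refine h.trans_eq (Fintype.sum_equiv σ.symm _ _ fun i => by simp)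

lemma wsq_le_minSWGG (hd : 1 ≤ d) (x y : Fin n → EuclideanSpace ℝ (Fin d)) :
    Wsq x y ≤ minSWGG x y := by
  refine le_csInf ?_ ?_
  · set θ : EuclideanSpace ℝ (Fin d) := EuclideanSpace.single ⟨0, hd⟩ (1:ℝ) with hθdef
    have hθ : ‖θ‖ = 1 := by simp [hθdef]
    set fx : Fin n → ℝ := fun i => ⟪x i, θ⟫ with hfx
    set fy : Fin n → ℝ := fun i => ⟪y i, θ⟫ with hfy
    exact ⟨_, θ, Tuple.sort fx, Tuple.sort fy, hθ,
      Tuple.monotone_sort fx, Tuple.monotone_sort fy, rfl⟩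
  · rintro r ⟨θ, σ, τ, -, -, -, rfl⟩
    exact wsq_le_swgg x y σ τ

lemma minSWGG_nonneg (hd : 1 ≤ d) (x y : Fin n → EuclideanSpace ℝ (Fin d)) :
    0 ≤ minSWGG x y :=
  (wsq_nonneg x y).trans (wsq_le_minSWGG hd x y)

lemma key_lemma (hd : 1 ≤ d) (y : Fin n → EuclideanSpace ℝ (Fin d)) :
    ∃ ε > (0:ℝ), ∀ (x : Fin n → EuclideanSpace ℝ (Fin d)) (ρ : Equiv.Perm (Fin n)),
      (∀ k, ‖x k - y (ρ k)‖ < ε) →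
      minSWGG x y ≤ (n : ℝ)⁻¹ * ∑ k, ‖x k - y (ρ k)‖ ^ 2 := by
  set θ : EuclideanSpace ℝ (Fin d) := EuclideanSpace.single ⟨0, hd⟩ (1:ℝ) with hθdef
  have hθ : ‖θ‖ = 1 := by simp [hθdef]
  set g : Fin n → ℝ := fun i => ⟪y i, θ⟫ with hg
  set T : Finset ℝ := Finset.image (fun p : Fin n × Fin n => g p.1 - g p.2)
    (Finset.univ.filter fun p => g p.2 < g p.1) with hT
  set δ : ℝ := if h : T.Nonempty then T.min' h else 1 with hδ
  have hδpos : 0 < δ := by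
    rw [hδ]
    split_ifs with h
    · obtain ⟨p, hp', he⟩ := Finset.mem_image.1 (T.min'_mem h)
      have hp := (Finset.mem_filter.1 hp').2
      linarith
    · norm_num
  have hgap : ∀ a b : Fin n, g b < g a → δ ≤ g a - g b := by
    intro a b hab
    have hmem : g a - g b ∈ T := by
      rw [hT]
      exact Finset.mem_image.2 ⟨(a, b), Finset.mem_filter.2 ⟨Finset.mem_univ _, hab⟩, rfl⟩
    rw [hδ]
    rw [dif_pos ⟨_, hmem⟩]
    exact Finset.min'_le _ _ hmem
  refine ⟨δ / 2, by linarith, fun x ρ hx => ?_⟩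
  set f : Fin n → ℝ := fun i => ⟪x i, θ⟫ with hf
  have hclose : ∀ k, |f k - g (ρ k)| < δ / 2 := by
    intro k
    have : f k - g (ρ k) = ⟪x k - y (ρ k), θ⟫ := by
      simp [hf, hg, inner_sub_left]
    rw [this]
    calc |⟪x k - y (ρ k), θ⟫| ≤ ‖x k - y (ρ k)‖ * ‖θ‖ := abs_real_inner_le_norm _ _
      _ = ‖x k - y (ρ k)‖ := by rw [hθ, mul_one]
      _ < δ / 2 := hx k
  set σ : Equiv.Perm (Fin n) := Tuple.sort f with hσ
  have hσmono : Monotone (f ∘ σ) := Tuple.monotone_sort f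
  set τ : Equiv.Perm (Fin n) := σ.trans ρ with hτ
  have hτmono : IsSorting θ y τ := by
    intro i j hij
    show g (τ i) ≤ g (τ j)
    by_contra h'
    push_neg at h'
    have h1 := hgap _ _ h'
    have h2 := hclose (σ i)
    have h3 := hclose (σ j)
    have h4 : f (σ i) ≤ f (σ j) := hσmono hij
    have hτi : τ i = ρ (σ i) := rfl
    have hτj : τ j = ρ (σ j) := rfl
    rw [hτi, hτj] at h1
    rw [abs_lt] at h2 h3
    linarith [h2.1, h2.2, h3.1, h3.2]
  have hσsort : IsSorting θ x σ := hσmono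
  have hmem : SWGG x y σ τ ∈ { r : ℝ | ∃ θ' : EuclideanSpace ℝ (Fin d),
      ∃ σ' τ' : Equiv.Perm (Fin n),
      ‖θ'‖ = 1 ∧ IsSorting θ' x σ' ∧ IsSorting θ' y τ' ∧ r = SWGG x y σ' τ' } :=
    ⟨θ, σ, τ, hθ, hσsort, hτmono, rfl⟩
  have hbdd : BddBelow { r : ℝ | ∃ θ' : EuclideanSpace ℝ (Fin d),
      ∃ σ' τ' : Equiv.Perm (Fin n),
      ‖θ'‖ = 1 ∧ IsSorting θ' x σ' ∧ IsSorting θ' y τ' ∧ r = SWGG x y σ' τ' } := by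
    refine ⟨0, ?_⟩
    rintro r ⟨θ', σ', τ', -, -, -, rfl⟩
    exact swgg_nonneg x y σ' τ'
  have hle : minSWGG x y ≤ SWGG x y σ τ := csInf_le hbdd hmem
  refine hle.trans_eq ?_
  unfold SWGG
  congr 1
  rw [← Equiv.sum_comp σ (fun k => ‖x k - y (ρ k)‖ ^ 2)]
  rfl

lemma wsq_attained (x y : Fin n → EuclideanSpace ℝ (Fin d)) :
    ∃ ρ : Equiv.Perm (Fin n), Wsq x y = (n : ℝ)⁻¹ * ∑ i, ‖x i - y (ρ i)‖ ^ 2 := by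
  obtain ⟨ρ, hρ⟩ := Finite.exists_min (fun ρ : Equiv.Perm (Fin n) => ∑ i, ‖x i - y (ρ i)‖ ^ 2)
  refine ⟨ρ, ?_⟩
  unfold Wsq
  congr 1
  exact le_antisymm (ciInf_le (Set.Finite.bddBelow (Set.finite_range _)) ρ) (le_ciInf hρ)

end lemmas

/-- `min-SWGG` metrizes convergence in squared Wasserstein distance on uniform `n`-atom
empirical measures: `min-SWGG(x⁽ᵏ⁾, y) → 0` iff `W²(x⁽ᵏ⁾, y) → 0`. -/


theorem minSWGG_tendsto_zero_iff {n d : ℕ} (hn : 1 ≤ n) (hd : 1 ≤ d)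
    (y : Fin n → EuclideanSpace ℝ (Fin d))
    (x : ℕ → Fin n → EuclideanSpace ℝ (Fin d)) :
    Filter.Tendsto (fun k => minSWGG (x k) y) Filter.atTop (nhds 0) ↔
      Filter.Tendsto (fun k => Wsq (x k) y) Filter.atTop (nhds 0) := by
  have hnpos : (0:ℝ) < n := by exact_mod_cast hn
  constructor
  · intro h
    exact squeeze_zero (fun k => wsq_nonneg _ _) (fun k => wsq_le_minSWGG hd _ _) h
  · intro h
    obtain ⟨ε, hε, hkey⟩ := key_lemma hd y
    have hthresh : (0:ℝ) < ε ^ 2 / n := by positivity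
    have h2 : ∀ᶠ k in Filter.atTop, Wsq (x k) y < ε ^ 2 / n :=
      h.eventually_lt_const hthresh
    refine tendsto_of_tendsto_of_tendsto_of_le_of_le' tendsto_const_nhds h
      (Filter.Eventually.of_forall fun k => minSWGG_nonneg hd _ _) ?_
    filter_upwards [h2] with k hk
    obtain ⟨ρ, hρ⟩ := wsq_attained (x k) y
    have hsum : ∑ i, ‖x k i - y (ρ i)‖ ^ 2 = n * Wsq (x k) y := by
      rw [hρ]; field_simp
    have hpt : ∀ i, ‖x k i - y (ρ i)‖ < ε := by
      intro i
      have h1 : ‖x k i - y (ρ i)‖ ^ 2 ≤ ∑ j, ‖x k j - y (ρ j)‖ ^ 2 :=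
        Finset.single_le_sum (f := fun j => ‖x k j - y (ρ j)‖ ^ 2)
          (fun j _ => by positivity) (Finset.mem_univ i)
      have h2 : ‖x k i - y (ρ i)‖ ^ 2 < ε ^ 2 := by
        rw [hsum] at h1
        calc ‖x k i - y (ρ i)‖ ^ 2 ≤ n * Wsq (x k) y := h1
          _ < n * (ε ^ 2 / n) := by exact mul_lt_mul_of_pos_left hk hnpos
          _ = ε ^ 2 := by field_simp
      exact lt_of_pow_lt_pow_left₀ 2 hε.le h2
    exact (hkey (x k) ρ hpt).trans_eq hρ.symm
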